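/- Let ψ : R̃ × ℝ → ℙ(ℂ⁸) be defined by ψ(u, φ) = the projective class of (u₁e^{iπφ}, u₂e^{iπφ}, u₃e^{iπφ}, u₄e^{iπφ}, u₅, u₆, u₇, u₈). For u, u′ ∈ R̃ and φ, φ′ ∈ ℝ, one has ψ(u, φ) = ψ(u′, φ′) if and only if one of the following holds: (u′ = u or u′ = −u) and e^{iπφ′} = e^{iπφ}, or (u′ = σ(u) or u′ = −σ(u)) and e^{iπφ′} = −e^{iπφ}, where σ(u) = (−u₁, −u₂, −u₃, −u₄, u₅, u₆, u₇, u₈). -/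

import Mathlib

/-- The defining condition of `R̃ ⊂ ℝ⁸`:
`u₁² + ⋯ + u₈² = 1` and `u₁² + u₂² + u₃² + u₄² = u₅² + u₆² + u₇² + u₈²`. -/
def RtildeCond (u : Fin 8 → ℝ) : Prop :=
  u 0 ^ 2 + u 1 ^ 2 + u 2 ^ 2 + u 3 ^ 2 + u 4 ^ 2 + u 5 ^ 2 + u 6 ^ 2 + u 7 ^ 2 = 1 ∧
  u 0 ^ 2 + u 1 ^ 2 + u 2 ^ 2 + u 3 ^ 2 = u 4 ^ 2 + u 5 ^ 2 + u 6 ^ 2 + u 7 ^ 2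

/-- The involution `σ(u) = (−u₁, −u₂, −u₃, −u₄, u₅, u₆, u₇, u₈)`. -/
def sigmaInv (u : Fin 8 → ℝ) : Fin 8 → ℝ :=
  fun j => if (j : ℕ) < 4 then -u j else u j

/-- The vector `(u₁e^{iπφ}, u₂e^{iπφ}, u₃e^{iπφ}, u₄e^{iπφ}, u₅, u₆, u₇, u₈) ∈ ℂ⁸`. -/
noncomputable def psiVec (u : Fin 8 → ℝ) (φ : ℝ) : Fin 8 → ℂ :=
  fun j => if (j : ℕ) < 4 then (u j : ℂ) * Complex.exp ((Real.pi * φ : ℝ) * Complex.I)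
           else (u j : ℂ)

theorem psiVec_ne_zero (u : Fin 8 → ℝ) (hu : RtildeCond u) (φ : ℝ) : psiVec u φ ≠ 0 := by
  intro h
  have hz : ∀ j, u j = 0 := by
    intro j
    have hj := congrFun h j
    simp only [psiVec, Pi.zero_apply] at hj
    split_ifs at hj with hlt
    · rcases mul_eq_zero.mp hj with h' | h'
      · exact_mod_cast h'
      · exact absurd h' (Complex.exp_ne_zero _)
    · exact_mod_cast hj
  have h1 := hu.1
  rw [hz 0, hz 1, hz 2, hz 3, hz 4, hz 5, hz 6, hz 7] at h1
  norm_num at h1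

/-- The map `ψ : R̃ × ℝ → ℙ(ℂ⁸)`,
`ψ(u, φ) = [u₁e^{iπφ} : u₂e^{iπφ} : u₃e^{iπφ} : u₄e^{iπφ} : u₅ : u₆ : u₇ : u₈]`. -/
noncomputable def psi (u : Fin 8 → ℝ) (hu : RtildeCond u) (φ : ℝ) :
    Projectivization ℂ (Fin 8 → ℂ) :=
  Projectivization.mk ℂ (psiVec u φ) (psiVec_ne_zero u hu φ)

/-- For `u, u′ ∈ R̃` and `φ, φ′ ∈ ℝ`, one has `ψ(u, φ) = ψ(u′, φ′)` iff either
(`u′ = u` or `u′ = −u`) and `e^{iπφ′} = e^{iπφ}`, or (`u′ = σ(u)` or `u′ = −σ(u)`)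
and `e^{iπφ′} = −e^{iπφ}`. -/
theorem psi_eq_iff (u u' : Fin 8 → ℝ) (hu : RtildeCond u) (hu' : RtildeCond u')
    (φ φ' : ℝ) :
    psi u hu φ = psi u' hu' φ' ↔
      (((u' = u ∨ u' = -u) ∧
          Complex.exp ((Real.pi * φ' : ℝ) * Complex.I) =
            Complex.exp ((Real.pi * φ : ℝ) * Complex.I)) ∨
       ((u' = sigmaInv u ∨ u' = -sigmaInv u) ∧
          Complex.exp ((Real.pi * φ' : ℝ) * Complex.I) =
            -Complex.exp ((Real.pi * φ : ℝ) * Complex.I))) := by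
  set E : ℂ := Complex.exp ((Real.pi * φ : ℝ) * Complex.I) with hEdef
  set E' : ℂ := Complex.exp ((Real.pi * φ' : ℝ) * Complex.I) with hE'def
  have hEabs : ‖E‖ = 1 := Complex.norm_exp_ofReal_mul_I _
  have hE'abs : ‖E'‖ = 1 := Complex.norm_exp_ofReal_mul_I _
  have hEne : E ≠ 0 := Complex.exp_ne_zero _
  have hE'ne : E' ≠ 0 := Complex.exp_ne_zero _
  rw [psi, psi, Projectivization.mk_eq_mk_iff]
  constructor
  · rintro ⟨a, ha⟩
    have key : ∀ j : Fin 8, (a : ℂ) * psiVec u' φ' j = psiVec u φ j := by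
      intro j
      have := congrFun ha j
      simpa [Units.smul_def, smul_eq_mul] using this
    have k2 : ∀ j : Fin 8, ¬ ((j:ℕ) < 4) → (a : ℂ) * (u' j : ℂ) = (u j : ℂ) := by
      intro j hj
      have := key j
      simp only [psiVec, if_neg hj] at this
      exact this
    have k1 : ∀ j : Fin 8, (j:ℕ) < 4 →
        (a : ℂ) * ((u' j : ℂ) * E') = (u j : ℂ) * E := by
      intro j hj
      have := key j
      simp only [psiVec, if_pos hj] at this
      exact this
    have hsum2 : u 4 ^ 2 + u 5 ^ 2 + u 6 ^ 2 + u 7 ^ 2 = 1/2 := by linarith [hu.1, hu.2]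
    have hsum1 : u 0 ^ 2 + u 1 ^ 2 + u 2 ^ 2 + u 3 ^ 2 = 1/2 := by linarith [hu.1, hu.2]
    have hsum2' : u' 4 ^ 2 + u' 5 ^ 2 + u' 6 ^ 2 + u' 7 ^ 2 = 1/2 := by
      linarith [hu'.1, hu'.2]
    obtain ⟨j0, hj0big, hj0ne⟩ : ∃ j : Fin 8, ¬((j:ℕ) < 4) ∧ u j ≠ 0 := by
      by_contra h
      push_neg at h
      have h4 : u 4 = 0 := h 4 (by decide)
      have h5 : u 5 = 0 := h 5 (by decide)
      have h6 : u 6 = 0 := h 6 (by decide)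
      have h7 : u 7 = 0 := h 7 (by decide)
      rw [h4, h5, h6, h7] at hsum2
      norm_num at hsum2
    have hj0'ne : u' j0 ≠ 0 := by
      intro h0
      apply hj0ne
      have := k2 j0 hj0big
      rw [h0] at this
      simpa using this.symm
    obtain ⟨cr, hc⟩ : ∃ cr : ℝ, (a : ℂ) = (cr : ℂ) := by
      refine ⟨u j0 / u' j0, ?_⟩
      have hk := k2 j0 hj0big
      have hne : (u' j0 : ℂ) ≠ 0 := by exact_mod_cast hj0'ne
      push_cast
      rw [eq_div_iff hne]
      linear_combination hk
    have hcr : ∀ j : Fin 8, ¬((j:ℕ) < 4) → u j = cr * u' j := by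
      intro j hj
      have hk := k2 j hj
      rw [hc] at hk
      exact_mod_cast hk.symm
    have hcrsq : cr ^ 2 = 1 := by
      have e4 := hcr 4 (by decide)
      have e5 := hcr 5 (by decide)
      have e6 := hcr 6 (by decide)
      have e7 := hcr 7 (by decide)
      rw [e4, e5, e6, e7] at hsum2
      nlinarith [hsum2, hsum2']
    have hcrne : cr ≠ 0 := by
      intro h0
      rw [h0] at hcrsq
      norm_num at hcrsq
    obtain ⟨j1, hj1lt, hj1ne⟩ : ∃ j : Fin 8, ((j:ℕ) < 4) ∧ u j ≠ 0 := by
      by_contra h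
      push_neg at h
      have h0 : u 0 = 0 := h 0 (by decide)
      have h1 : u 1 = 0 := h 1 (by decide)
      have h2 : u 2 = 0 := h 2 (by decide)
      have h3 : u 3 = 0 := h 3 (by decide)
      rw [h0, h1, h2, h3] at hsum1
      norm_num at hsum1
    have hj1'ne : u' j1 ≠ 0 := by
      intro h0
      apply hj1ne
      have hk := k1 j1 hj1lt
      rw [h0] at hk
      simp only [Complex.ofReal_zero, zero_mul, mul_zero] at hk
      have hz : (u j1 : ℂ) = 0 := by
        rcases mul_eq_zero.mp hk.symm with h' | h'
        · exact h'
        · exact absurd h' hEne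
      exact_mod_cast hz
    obtain ⟨r, hEr⟩ : ∃ r : ℝ, E' = (r : ℂ) * E := by
      refine ⟨u j1 / (cr * u' j1), ?_⟩
      have hk := k1 j1 hj1lt
      rw [hc] at hk
      have hne : ((cr : ℂ) * (u' j1 : ℂ)) ≠ 0 := by
        have : cr * u' j1 ≠ 0 := mul_ne_zero hcrne hj1'ne
        exact_mod_cast this
      push_cast
      rw [div_mul_eq_mul_div, eq_div_iff hne]
      linear_combination hk
    have hrr : r = 1 ∨ r = -1 := by
      have habs : |r| = 1 := by
        have h := hE'abs
        rw [hEr, norm_mul, Complex.norm_real, Real.norm_eq_abs, hEabs, mul_one] at h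
        exact h
      rcases (abs_eq (by norm_num : (0:ℝ) ≤ 1)).mp habs with h | h
      · exact Or.inl h
      · exact Or.inr h
    have hrsq : r ^ 2 = 1 := by rcases hrr with h | h <;> rw [h] <;> norm_num
    have h1block : ∀ j : Fin 8, (j:ℕ) < 4 → u' j = cr * r * u j := by
      intro j hj
      have hk := k1 j hj
      rw [hc, hEr] at hk
      have step : cr * r * u' j = u j := by
        have hcx : ((cr * r * u' j : ℝ) : ℂ) = ((u j : ℝ) : ℂ) := by
          apply mul_right_cancel₀ hEne
          push_cast
          linear_combination hk
        exact_mod_cast hcx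
      have hsq : (cr * r) ^ 2 = 1 := by rw [mul_pow, hcrsq, hrsq]; norm_num
      linear_combination (cr * r) * step - u' j * hsq
    have h2block : ∀ j : Fin 8, ¬((j:ℕ) < 4) → u' j = cr * u j := by
      intro j hj
      have e := hcr j hj
      linear_combination (-cr) * e - u' j * hcrsq
    have hcc : cr = 1 ∨ cr = -1 := by
      have h0 : (cr - 1) * (cr + 1) = 0 := by linear_combination hcrsq
      rcases mul_eq_zero.mp h0 with h | h
      · exact Or.inl (by linarith)
      · exact Or.inr (by linarith)
    rcases hrr with r1 | r1
    · subst r1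
      refine Or.inl ⟨?_, by rw [hEr]; norm_num⟩
      rcases hcc with c1 | c1 <;> subst c1
      · left
        funext j
        by_cases hj : (j:ℕ) < 4
        · simpa using h1block j hj
        · simpa using h2block j hj
      · right
        funext j
        by_cases hj : (j:ℕ) < 4
        · have := h1block j hj; simp only [Pi.neg_apply]; linarith
        · have := h2block j hj; simp only [Pi.neg_apply]; linarith
    · subst r1
      refine Or.inr ⟨?_, by rw [hEr]; push_cast; ring⟩
      rcases hcc with c1 | c1 <;> subst c1
      · left
        funext j
        by_cases hj : (j:ℕ) < 4
        · have := h1block j hj; simp only [sigmaInv, if_pos hj]; linarith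
        · have := h2block j hj; simp only [sigmaInv, if_neg hj]; linarith
      · right
        funext j
        by_cases hj : (j:ℕ) < 4
        · have := h1block j hj; simp only [Pi.neg_apply, sigmaInv, if_pos hj]; linarith
        · have := h2block j hj; simp only [Pi.neg_apply, sigmaInv, if_neg hj]; linarith
  · rintro (⟨h1 | h1, hE⟩ | ⟨h1 | h1, hE⟩)
    · refine ⟨1, ?_⟩
      subst h1
      funext j
      simp only [Units.smul_def, Units.val_one, Pi.smul_apply, smul_eq_mul, one_mul,
        psiVec]
      split_ifs with hj
      · rw [← hE'def, ← hEdef, hE]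
      · rfl
    · refine ⟨-1, ?_⟩
      subst h1
      funext j
      simp only [Units.smul_def, Units.val_neg, Units.val_one, Pi.smul_apply,
        smul_eq_mul, psiVec, Pi.neg_apply]
      split_ifs with hj
      · rw [← hE'def, ← hEdef, hE]; push_cast; ring
      · push_cast; ring
    · refine ⟨1, ?_⟩
      subst h1
      funext j
      simp only [Units.smul_def, Units.val_one, Pi.smul_apply, smul_eq_mul, one_mul,
        psiVec, sigmaInv]
      split_ifs with hj
      · rw [← hE'def, ← hEdef, hE]; push_cast; ring
      · rfl
    · refine ⟨-1, ?_⟩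
      subst h1
      funext j
      simp only [Units.smul_def, Units.val_neg, Units.val_one, Pi.smul_apply,
        smul_eq_mul, psiVec, sigmaInv, Pi.neg_apply]
      split_ifs with hj
      · rw [← hE'def, ← hEdef, hE]; push_cast; ring
      · push_cast; ring
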